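/- arXiv:1605.05223 — 2 statements merged into one kernel-verified Lean document; each statement's English description precedes it below -/
import Mathlib

section
/- For any real constant C > 2, any a, b ∈ [0,1] and any θ ∈ [0,1], the function g(x) = Real.sqrt (x * (C - x)) satisfies g(θ*a + (1-θ)*b) ≥ θ*g(a) + (1-θ)*g(b) + ((C-2)^2 / C^3) * θ * (1-θ) * (a - b)^2. -/
/-!
Write `g x = √(x (C - x))`, `m = θ a + (1 - θ) b` and `δ = θ (1 - θ) (a - b)²`. Since `x (C - x)` is
a quadratic with leading coefficient `-1`, `g m ^ 2 = θ g(a)² + (1 - θ) g(b)² + δ`, and by convexity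
of the square this is at least `X² + δ` for `X = θ g(a) + (1 - θ) g(b)`. As `g ≤ C / 2`, the bound
`(X + k δ)² ≤ X² + δ` holds as soon as `k C + k² δ ≤ 1`, which for `k = (C - 2)² / C³` follows
from `δ ≤ 1 / 4`.
-/

lemma add_mul_le_sqrt_of_sq_add_le {X M Y δ k : ℝ} (hXM : X ≤ M) (hδ : 0 ≤ δ)
    (hk : 0 ≤ k) (hkM : 2 * k * M + k ^ 2 * δ ≤ 1) (hY : X ^ 2 + δ ≤ Y) :
    X + k * δ ≤ √Y := by
  apply Real.le_sqrt_of_sq_le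
  have hkδX : k * δ * X ≤ k * δ * M := mul_le_mul_of_nonneg_left hXM (by positivity)
  calc (X + k * δ) ^ 2 = X ^ 2 + 2 * (k * δ * X) + k ^ 2 * δ * δ := by ring
    _ ≤ X ^ 2 + δ * (2 * k * M + k ^ 2 * δ) := by nlinarith
    _ ≤ X ^ 2 + δ := by nlinarith
    _ ≤ Y := hY

lemma sqrt_mul_sub_le_half {C : ℝ} (hC : 0 ≤ C) (x : ℝ) : √(x * (C - x)) ≤ C / 2 :=
  Real.sqrt_le_iff.2 ⟨by positivity, by nlinarith [sq_nonneg (2 * x - C)]⟩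

lemma convexComb_mul_sub (C a b θ : ℝ) :
    (θ * a + (1 - θ) * b) * (C - (θ * a + (1 - θ) * b))
      = θ * (a * (C - a)) + (1 - θ) * (b * (C - b)) + θ * (1 - θ) * (a - b) ^ 2 := by
  ring

lemma sq_convexComb_le {θ : ℝ} (hθ0 : 0 ≤ θ) (hθ1 : θ ≤ 1) (s t : ℝ) :
    (θ * s + (1 - θ) * t) ^ 2 ≤ θ * s ^ 2 + (1 - θ) * t ^ 2 := by
  have hgap : θ * s ^ 2 + (1 - θ) * t ^ 2 - (θ * s + (1 - θ) * t) ^ 2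
      = θ * (1 - θ) * (s - t) ^ 2 := by ring
  have : 0 ≤ θ * (1 - θ) * (s - t) ^ 2 := by
    have : 0 ≤ 1 - θ := by linarith
    positivity
  linarith

theorem sqrt_mul_sub_strongly_concave {C a b θ k : ℝ} (ha0 : 0 ≤ a) (haC : a ≤ C)
    (hb0 : 0 ≤ b) (hbC : b ≤ C) (hθ0 : 0 ≤ θ) (hθ1 : θ ≤ 1) (hk : 0 ≤ k)
    (hkC : k * C + k ^ 2 * (θ * (1 - θ) * (a - b) ^ 2) ≤ 1) :
    θ * √(a * (C - a)) + (1 - θ) * √(b * (C - b)) + k * θ * (1 - θ) * (a - b) ^ 2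
      ≤ √((θ * a + (1 - θ) * b) * (C - (θ * a + (1 - θ) * b))) := by
  have hC : 0 ≤ C := ha0.trans haC
  have hθ1' : 0 ≤ 1 - θ := by linarith
  have hsq_a : √(a * (C - a)) ^ 2 = a * (C - a) := Real.sq_sqrt (by nlinarith)
  have hsq_b : √(b * (C - b)) ^ 2 = b * (C - b) := Real.sq_sqrt (by nlinarith)
  have hX_le : θ * √(a * (C - a)) + (1 - θ) * √(b * (C - b)) ≤ C / 2 := by
    have := mul_le_mul_of_nonneg_left (sqrt_mul_sub_le_half hC a) hθ0
    have := mul_le_mul_of_nonneg_left (sqrt_mul_sub_le_half hC b) hθ1'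
    linarith
  rw [show k * θ * (1 - θ) * (a - b) ^ 2 = k * (θ * (1 - θ) * (a - b) ^ 2) by ring]
  refine add_mul_le_sqrt_of_sq_add_le hX_le (by positivity) hk (by linarith) ?_
  have hjensen := sq_convexComb_le hθ0 hθ1 √(a * (C - a)) √(b * (C - b))
  rw [hsq_a, hsq_b] at hjensen
  rw [convexComb_mul_sub]
  linarith

lemma mul_one_sub_mul_sq_sub_le_quarter (θ : ℝ) {a b : ℝ} (ha0 : 0 ≤ a) (ha1 : a ≤ 1)
    (hb0 : 0 ≤ b) (hb1 : b ≤ 1) :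
    θ * (1 - θ) * (a - b) ^ 2 ≤ 1 / 4 := by
  have hθ : θ * (1 - θ) ≤ 1 / 4 := by nlinarith [sq_nonneg (θ - 1 / 2)]
  have hab : (a - b) ^ 2 ≤ 1 := by nlinarith
  calc θ * (1 - θ) * (a - b) ^ 2 ≤ 1 / 4 * 1 :=
        mul_le_mul hθ hab (sq_nonneg _) (by norm_num)
    _ = 1 / 4 := by norm_num

lemma modulus_mul_add_sq_mul_quarter_le_one {C : ℝ} (hC : 2 < C) :
    (C - 2) ^ 2 / C ^ 3 * C + ((C - 2) ^ 2 / C ^ 3) ^ 2 * (1 / 4) ≤ 1 := by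
  have hC0 : 0 < C := by linarith
  have hsmall : (C - 2) ^ 4 ≤ C ^ 4 := by
    have : (C - 2) ^ 2 ≤ C ^ 2 := by nlinarith
    nlinarith
  -- `4 C⁶ - 4 C⁴ (C - 2)² = 16 C⁴ (C - 1)`, which dominates `C⁴`.
  have hpoly : 4 * C ^ 4 * (C - 2) ^ 2 + (C - 2) ^ 4 ≤ 4 * C ^ 6 := by
    have : C ^ 4 ≤ 16 * C ^ 4 * (C - 1) := by nlinarith [pow_pos hC0 4]
    nlinarith
  have hsplit : (C - 2) ^ 2 / C ^ 3 * C + ((C - 2) ^ 2 / C ^ 3) ^ 2 * (1 / 4)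
      = (4 * C ^ 4 * (C - 2) ^ 2 + (C - 2) ^ 4) / (4 * C ^ 6) := by
    field_simp
  rw [hsplit, div_le_one (by positivity)]
  exact hpoly

/-- Scalar strong-concavity claim from the proof of Lemma 13:
`x ↦ √(x(C-x))` is strongly concave on `[0,1]` with modulus `2(C-2)^2/C^3` when `C > 2`. -/
theorem sqrt_mul_strong_concavity (C a b θ : ℝ) (hC : 2 < C)
    (ha0 : 0 ≤ a) (ha1 : a ≤ 1) (hb0 : 0 ≤ b) (hb1 : b ≤ 1)
    (hθ0 : 0 ≤ θ) (hθ1 : θ ≤ 1) :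
    Real.sqrt ((θ * a + (1 - θ) * b) * (C - (θ * a + (1 - θ) * b)))
      ≥ θ * Real.sqrt (a * (C - a)) + (1 - θ) * Real.sqrt (b * (C - b))
        + ((C - 2)^2 / C^3) * θ * (1 - θ) * (a - b)^2 := by
  have hδ := mul_one_sub_mul_sq_sub_le_quarter θ ha0 ha1 hb0 hb1
  have hk : 0 ≤ (C - 2) ^ 2 / C ^ 3 := by positivity
  refine sqrt_mul_sub_strongly_concave ha0 (by linarith) hb0 (by linarith) hθ0 hθ1 hk ?_
  calc _ ≤ (C - 2) ^ 2 / C ^ 3 * C + ((C - 2) ^ 2 / C ^ 3) ^ 2 * (1 / 4) := by gcongr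
    _ ≤ 1 := modulus_mul_add_sq_mul_quarter_le_one hC
end

section
/- Let γ ∈ (0, 1/2]. For any node split satisfying the weak hypothesis assumption, i.e. γ ≤ β ≤ 1 - γ and J ≥ 2γ, the entropy reduction of the split satisfies H(π) - (1-β)*H(π₀) - β*H(π₁) ≥ γ^2 / (2 * (1 - γ)^2). -/
/-!
The entropy reduction of a split is the mutual information between the class and the side of
the split. Expanding it from the side of the split instead of the class turns it into
`∑ i, π i * KL(Bernoulli (P i) ‖ Bernoulli β)`, already for each class separately. Pinsker's
inequality for Bernoulli distributions, `KL ≥ 2 (p - q)²`, and Jensen's inequality then bound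
it below by `2 (∑ i, π i * |β - P i|)² = J² / 2 ≥ 2 γ²`, which is at least
`γ² / (2 (1 - γ)²)` as `γ ≤ 1/2`. Binary Pinsker is the tangent-line inequality at `q` for the
concave function `binEntropy p + 2 p²`, whose second derivative is `4 - 1 / (p (1 - p)) ≤ 0`.
-/

open Finset Set

section

open Real

noncomputable def bernoulliKL (p q : ℝ) : ℝ :=
  p * log (p / q) + (1 - p) * log ((1 - p) / (1 - q))

lemma mul_log_div_of_ne_zero (x : ℝ) {y : ℝ} (hy : y ≠ 0) :
    x * log (x / y) = x * log x - x * log y := by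
  rcases eq_or_ne x 0 with rfl | hx
  · simp
  · rw [log_div hx hy]; ring

lemma bernoulliKL_eq_neg_binEntropy_sub {p q : ℝ} (hq0 : q ≠ 0) (hq1 : q ≠ 1) :
    bernoulliKL p q = -binEntropy p - p * log q - (1 - p) * log (1 - q) := by
  rw [bernoulliKL, mul_log_div_of_ne_zero _ hq0,
    mul_log_div_of_ne_zero _ (sub_ne_zero.2 hq1.symm), binEntropy, log_inv, log_inv]
  ring

lemma ConcaveOn.le_add_mul_sub_of_hasDerivAt {S : Set ℝ} {f : ℝ → ℝ} {x y f' : ℝ}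
    (hf : ConcaveOn ℝ S f) (hx : x ∈ S) (hy : y ∈ S) (hf' : HasDerivAt f f' x) :
    f y ≤ f x + f' * (y - x) := by
  rcases lt_trichotomy x y with hxy | rfl | hxy
  · have := hf.neg.le_slope_of_hasDerivAt hx hy hxy hf'.neg
    rw [slope_def_field, le_div_iff₀ (sub_pos.2 hxy)] at this
    simp only [Pi.neg_apply] at this
    linarith
  · simp
  · have := hf.neg.slope_le_of_hasDerivAt hy hx hxy hf'.neg
    rw [slope_def_field, div_le_iff₀ (sub_pos.2 hxy)] at this
    simp only [Pi.neg_apply] at this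
    linarith

lemma hasDerivAt_binEntropy_add_two_mul_sq {p : ℝ} (hp0 : p ≠ 0) (hp1 : p ≠ 1) :
    HasDerivAt (fun p => binEntropy p + 2 * p ^ 2) (log (1 - p) - log p + 4 * p) p := by
  refine ((hasDerivAt_binEntropy hp0 hp1).fun_add
    ((hasDerivAt_pow 2 p).const_mul 2)).congr_deriv ?_
  ring

lemma concaveOn_binEntropy_add_two_mul_sq :
    ConcaveOn ℝ (Icc 0 1) (fun p => binEntropy p + 2 * p ^ 2) := by
  refine concaveOn_of_hasDerivWithinAt2_nonpos (convex_Icc 0 1) (by fun_prop)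
    (f' := fun p => log (1 - p) - log p + 4 * p) (f'' := fun p => -(1 - p)⁻¹ - p⁻¹ + 4)
    (fun p hp => ?_) (fun p hp => ?_) (fun p hp => ?_) <;>
    rw [interior_Icc] at hp <;> obtain ⟨hp0, hp1⟩ := hp
  · exact (hasDerivAt_binEntropy_add_two_mul_sq hp0.ne' hp1.ne).hasDerivWithinAt
  · have h1 := ((hasDerivAt_id' p).const_sub 1).log (sub_ne_zero.2 hp1.ne')
    have h2 := hasDerivAt_log hp0.ne'
    refine (((h1.fun_sub h2).fun_add ((hasDerivAt_id' p).const_mul 4)).congr_deriv ?_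
      ).hasDerivWithinAt
    ring
  · have h : 4 ≤ (1 - p)⁻¹ + p⁻¹ := by
      rw [inv_add_inv (by linarith) hp0.ne', le_div_iff₀ (by nlinarith)]
      nlinarith [sq_nonneg (2 * p - 1)]
    linarith

lemma two_mul_sq_le_bernoulliKL {p q : ℝ} (hp0 : 0 ≤ p) (hp1 : p ≤ 1) (hq0 : 0 < q)
    (hq1 : q < 1) :
    2 * (p - q) ^ 2 ≤ bernoulliKL p q := by
  have := concaveOn_binEntropy_add_two_mul_sq.le_add_mul_sub_of_hasDerivAt
    ⟨hq0.le, hq1.le⟩ ⟨hp0, hp1⟩ (hasDerivAt_binEntropy_add_two_mul_sq hq0.ne' hq1.ne)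
  rw [bernoulliKL_eq_neg_binEntropy_sub hq0.ne' hq1.ne]
  simp only [binEntropy, log_inv] at this ⊢
  linear_combination this

lemma mul_log_one_div (x : ℝ) : x * log (1 / x) = negMulLog x := by
  rw [one_div, log_inv, negMulLog]; ring

lemma negMulLog_sub_split_eq_mul_bernoulliKL (a p b : ℝ) (hb0 : b ≠ 0) (hb1 : b ≠ 1) :
    negMulLog a - (1 - b) * negMulLog (a * (1 - p) / (1 - b)) - b * negMulLog (a * p / b)
      = a * bernoulliKL p b := by
  rw [bernoulliKL_eq_neg_binEntropy_sub hb0 hb1, binEntropy_eq_negMulLog_add_negMulLog_one_sub]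
  simp only [div_eq_mul_inv, negMulLog_mul]
  simp only [negMulLog, log_inv]
  field_simp
  ring

lemma sq_sum_mul_le_sum_mul_sq {ι : Type*} (s : Finset ι) {w : ι → ℝ} (x : ι → ℝ)
    (hw : ∀ i ∈ s, 0 ≤ w i) (hws : ∑ i ∈ s, w i = 1) :
    (∑ i ∈ s, w i * x i) ^ 2 ≤ ∑ i ∈ s, w i * x i ^ 2 :=
  (even_two.convexOn_pow (𝕜 := ℝ)).map_sum_le hw hws fun _ _ => Set.mem_univ _

end

theorem entropy_reduction_weak_hyp_general (k : ℕ)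
    (γ : ℝ) (hγ0 : 0 < γ) (hγhalf : γ ≤ 1/2)
    (π P : Fin k → ℝ) (β J : ℝ) (π₀ π₁ : Fin k → ℝ)
    (hπ : ∀ i, 0 ≤ π i) (hπs : ∑ i, π i = 1)
    (hP0 : ∀ i, 0 ≤ P i) (hP1 : ∀ i, P i ≤ 1)
    (hJ : J = 2 * ∑ i, π i * |β - P i|)
    (hβlo : γ ≤ β) (hβhi : β ≤ 1 - γ) (hJγ : 2 * γ ≤ J)
    (hπ₀ : ∀ i, π₀ i = π i * (1 - P i) / (1 - β))
    (hπ₁ : ∀ i, π₁ i = π i * P i / β) :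
    (∑ i, π i * Real.log (1 / π i))
        - (1 - β) * (∑ i, π₀ i * Real.log (1 / π₀ i))
        - β * (∑ i, π₁ i * Real.log (1 / π₁ i))
      ≥ γ^2 / (2 * (1 - γ)^2) := by
  have hβ0 : 0 < β := hγ0.trans_le hβlo
  have hβ1 : β < 1 := by linarith
  simp only [ge_iff_le, mul_log_one_div, hπ₀, hπ₁, mul_sum, ← sum_sub_distrib,
    negMulLog_sub_split_eq_mul_bernoulliKL _ _ _ hβ0.ne' hβ1.ne]
  calc γ ^ 2 / (2 * (1 - γ) ^ 2)
      ≤ 2 * γ ^ 2 := by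
        have h : 1 ≤ 4 * (1 - γ) ^ 2 := by nlinarith
        rw [div_le_iff₀ (by nlinarith)]
        nlinarith [mul_le_mul_of_nonneg_left h (sq_nonneg γ)]
    _ ≤ 2 * (∑ i, π i * |β - P i|) ^ 2 := by gcongr; linarith
    _ ≤ 2 * ∑ i, π i * (β - P i) ^ 2 := by
        gcongr
        simpa only [sq_abs] using
          sq_sum_mul_le_sum_mul_sq univ (fun i => |β - P i|) (fun i _ => hπ i) hπs
    _ ≤ ∑ i, π i * bernoulliKL (P i) β := by
        rw [mul_sum]
        refine sum_le_sum fun i _ => ?_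
        have := two_mul_sq_le_bernoulliKL (hP0 i) (hP1 i) hβ0 hβ1
        nlinarith [mul_le_mul_of_nonneg_left this (hπ i)]

/-- Equation (8): under the weak hypothesis assumption the entropy
reduction of a split is at least `γ²/(2(1-γ)²)`. -/
theorem entropy_reduction_weak_hyp (k : ℕ) (hk : 2 ≤ k)
    (γ : ℝ) (hγ0 : 0 < γ) (hγhalf : γ ≤ 1/2)
    (π P : Fin k → ℝ) (β J : ℝ) (π₀ π₁ : Fin k → ℝ)
    (hπ : ∀ i, 0 ≤ π i) (hπs : ∑ i, π i = 1)
    (hP0 : ∀ i, 0 ≤ P i) (hP1 : ∀ i, P i ≤ 1)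
    (hβ : β = ∑ i, π i * P i)
    (hJ : J = 2 * ∑ i, π i * |β - P i|)
    (hβlo : γ ≤ β) (hβhi : β ≤ 1 - γ) (hJγ : 2 * γ ≤ J)
    (hπ₀ : ∀ i, π₀ i = π i * (1 - P i) / (1 - β))
    (hπ₁ : ∀ i, π₁ i = π i * P i / β) :
    (∑ i, π i * Real.log (1 / π i))
        - (1 - β) * (∑ i, π₀ i * Real.log (1 / π₀ i))
        - β * (∑ i, π₁ i * Real.log (1 / π₁ i))
      ≥ γ^2 / (2 * (1 - γ)^2) :=
  entropy_reduction_weak_hyp_general k γ hγ0 hγhalf π P β J π₀ π₁ hπ hπs hP0 hP1 hJ hβlo hβhi hJγ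
    hπ₀ hπ₁
end
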